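/- arXiv:1402.6724 — 4 statements merged into one kernel-verified Lean document; each statement's English description precedes it below -/
import Mathlib

section
/- Let x₁, …, xₙ be points of a set E, let r : E → (0, ∞), let λ > 0 and v* ∈ (0, λ), and let U₁, …, Uₙ be independent random variables uniformly distributed on [0, λ]. For each i, on {Uᵢ > v*} define τᵢ by e^{−r(xᵢ) τᵢ} = (λ − Uᵢ)/(λ − v*), and on {Uᵢ < v*} define τᵢ by e^{−r(xᵢ) τᵢ} = Uᵢ / v*. Then the τᵢ are independent, τᵢ is exponentially distributed with rate r(xᵢ), almost surely there is a unique index attaining min_i τᵢ, and for each j, P(τⱼ = min_i τᵢ) = r(xⱼ) / Σᵢ r(xᵢ). -/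
/-!
Each `τ i` is almost surely the deterministic function `lookdownTime (r (x i)) λ v*` of `U i`,
and this function pushes the uniform law on `[0, λ]` forward to the exponential law: for `t ≥ 0`
the event `{t < τ}` is `U ∈ (λ - (λ - v*) e^{-rt}, λ) ∪ (0, v* e^{-rt})`, of length `λ e^{-rt}`.
Independence is inherited from the `U i`. Exponential laws have no atoms, so independent clocks
tie with probability zero and the minimum is a.s. unique. Finally, given `τ j = a`, the other
clocks all exceed `a` with probability `e^{-b a}`, `b = ∑_{i ≠ j} r (x i)`, so `τ j` is minimal
with probability `∫ r e^{-r a} e^{-b a} da = r / (r + b)`.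
-/

open MeasureTheory ProbabilityTheory Set

namespace ProbabilityTheory

lemma expMeasure_eq_withDensity (r : ℝ) :
    expMeasure r = volume.withDensity (exponentialPDF r) := rfl

lemma measurable_exponentialPDF (r : ℝ) : Measurable (exponentialPDF r) :=
  (measurable_exponentialPDFReal r).ennreal_ofReal

lemma expMeasure_absolutelyContinuous (r : ℝ) : expMeasure r ≪ volume :=
  withDensity_absolutelyContinuous _ _

lemma expMeasure_Ioi {r : ℝ} (hr : 0 < r) (a : ℝ) :
    expMeasure r (Ioi a) = ENNReal.ofReal (Real.exp (-(r * max a 0))) := by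
  have := isProbabilityMeasure_expMeasure hr
  rcases le_or_gt 0 a with ha | ha
  · rw [← compl_Iic, prob_compl_eq_one_sub measurableSet_Iic, ← ofReal_cdf,
      cdf_expMeasure_eq hr, if_pos ha, max_eq_left ha, ← ENNReal.ofReal_one,
      ← ENNReal.ofReal_sub _ (sub_nonneg.mpr (Real.exp_le_one_iff.mpr (by nlinarith))),
      sub_sub_cancel]
  · rw [max_eq_right ha.le, mul_zero, neg_zero, Real.exp_zero, ENNReal.ofReal_one,
      ← compl_Iic, prob_compl_eq_one_sub measurableSet_Iic, ← ofReal_cdf,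
      cdf_expMeasure_eq hr, if_neg ha.not_ge, ENNReal.ofReal_zero, tsub_zero]

lemma expMeasure_Ici {r : ℝ} (hr : 0 < r) (a : ℝ) :
    expMeasure r (Ici a) = ENNReal.ofReal (Real.exp (-(r * max a 0))) := by
  rw [← expMeasure_Ioi hr, measure_congr]
  exact (Ioi_ae_eq_Ici' ((expMeasure_absolutelyContinuous r) Real.volume_singleton)).symm

lemma eq_expMeasure_of_measure_Ioi {μ : Measure ℝ} [IsProbabilityMeasure μ] {r : ℝ}
    (hr : 0 < r) (h : ∀ t, 0 ≤ t → μ (Ioi t) = ENNReal.ofReal (Real.exp (-(r * t)))) :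
    μ = expMeasure r := by
  have := isProbabilityMeasure_expMeasure hr
  have hIoi : ∀ t, 0 ≤ t → μ (Ioi t) = expMeasure r (Ioi t) := fun t ht ↦ by
    rw [h t ht, expMeasure_Ioi hr, max_eq_left ht]
  have hIic : ∀ (ν : Measure ℝ) [IsProbabilityMeasure ν] (a : ℝ), ν (Iic a) = 1 - ν (Ioi a) :=
    fun ν _ a ↦ by rw [← compl_Ioi, prob_compl_eq_one_sub measurableSet_Ioi]
  have hnull : ∀ (ν : Measure ℝ) [IsProbabilityMeasure ν], ν (Ioi 0) = 1 → ∀ a < 0,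
      ν (Iic a) = 0 := fun ν _ h0 a ha ↦
    measure_mono_null (Iic_subset_Iic.mpr ha.le) (by rw [hIic, h0, tsub_self])
  refine Measure.ext_of_Iic _ _ fun a ↦ ?_
  rcases le_or_gt 0 a with ha | ha
  · rw [hIic, hIic, hIoi a ha]
  · have h0 : μ (Ioi 0) = 1 := by simpa using h 0 le_rfl
    rw [hnull μ h0 a ha, hnull _ (by rwa [← hIoi 0 le_rfl]) a ha]

lemma lintegral_exp_neg_mul_max_expMeasure {r b : ℝ} (hr : 0 < r) (hb : 0 ≤ b) :
    ∫⁻ a, ENNReal.ofReal (Real.exp (-(b * max a 0))) ∂expMeasure r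
      = ENNReal.ofReal (r / (r + b)) := by
  have hrb : 0 < r + b := by linarith
  have hpdf : ∀ a, exponentialPDF r a * ENNReal.ofReal (Real.exp (-(b * max a 0)))
      = ENNReal.ofReal (r / (r + b)) * exponentialPDF (r + b) a := by
    intro a
    rcases lt_or_ge a 0 with ha | ha
    · simp [exponentialPDF_of_neg ha]
    · rw [exponentialPDF_of_nonneg ha, exponentialPDF_of_nonneg ha, max_eq_left ha,
        ← ENNReal.ofReal_mul (by positivity), ← ENNReal.ofReal_mul (by positivity)]
      congr 1
      rw [div_mul_eq_mul_div, mul_assoc, ← Real.exp_add]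
      field_simp
      ring_nf
  rw [expMeasure_eq_withDensity, lintegral_withDensity_eq_lintegral_mul _
    (measurable_exponentialPDF r) (by fun_prop)]
  simp_rw [Pi.mul_apply, hpdf]
  rw [lintegral_const_mul _ (measurable_exponentialPDF _), lintegral_exponentialPDF_eq_one hrb,
    mul_one]

variable {Ω : Type*} [MeasurableSpace Ω] {P : Measure Ω}

lemma IndepFun.measure_preimage_eq_lintegral [IsProbabilityMeasure P] {α β : Type*}
    [MeasurableSpace α] [MeasurableSpace β] {X : Ω → α} {Y : Ω → β} (hX : Measurable X)
    (hY : Measurable Y) (hXY : IndepFun X Y P) {D : Set (α × β)} (hD : MeasurableSet D) :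
    P ((fun ω ↦ (X ω, Y ω)) ⁻¹' D) = ∫⁻ a, P (Y ⁻¹' (Prod.mk a ⁻¹' D)) ∂P.map X := by
  rw [← Measure.map_apply (hX.prodMk hY) hD,
    hXY.map_prod_eq_prod_map_map hX.aemeasurable hY.aemeasurable, Measure.prod_apply hD]
  exact lintegral_congr fun a ↦ Measure.map_apply hY (measurable_prodMk_left hD)

lemma IndepFun.measure_eq_eq_zero [IsProbabilityMeasure P] {α : Type*} [MeasurableSpace α]
    [MeasurableEq α]
    {X Y : Ω → α} (hX : Measurable X) (hY : Measurable Y) (hXY : IndepFun X Y P)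
    (hY_atom : ∀ a, P (Y ⁻¹' {a}) = 0) :
    P {ω | X ω = Y ω} = 0 := by
  have hslice : ∀ a, Prod.mk a ⁻¹' diagonal α = {a} := fun a ↦ by
    ext; simp [eq_comm]
  have := hXY.measure_preimage_eq_lintegral hX hY measurableSet_diagonal
  simp only [hslice, hY_atom, lintegral_zero] at this
  exact this

section ExponentialClocks

variable {ι : Type*} {τ : ι → Ω → ℝ} {rate : ι → ℝ}

lemma measure_biInter_Ici_of_iIndepFun_expMeasure (hτ : ∀ i, Measurable (τ i))
    (hind : iIndepFun τ P) (hrate : ∀ i, 0 < rate i)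
    (hlaw : ∀ i, P.map (τ i) = expMeasure (rate i)) (T : Finset ι) (a : ℝ) :
    P (⋂ i ∈ T, τ i ⁻¹' Ici a) = ENNReal.ofReal (Real.exp (-((∑ i ∈ T, rate i) * max a 0))) := by
  rw [hind.measure_inter_preimage_eq_mul T (fun _ _ ↦ measurableSet_Ici)]
  simp_rw [← Measure.map_apply (hτ _) measurableSet_Ici, hlaw, expMeasure_Ici (hrate _)]
  rw [← ENNReal.ofReal_prod_of_nonneg (fun i _ ↦ Real.exp_nonneg _), ← Real.exp_sum,
    Finset.sum_mul, Finset.sum_neg_distrib]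

lemma measure_forall_le_of_iIndepFun_expMeasure [Fintype ι] [IsProbabilityMeasure P]
    (hτ : ∀ i, Measurable (τ i)) (hind : iIndepFun τ P) (hrate : ∀ i, 0 < rate i)
    (hlaw : ∀ i, P.map (τ i) = expMeasure (rate i)) (j : ι) :
    P {ω | ∀ i, τ j ω ≤ τ i ω} = ENNReal.ofReal (rate j / ∑ i, rate i) := by
  classical
  set T := Finset.univ.erase j
  let W : Ω → (T → ℝ) := fun ω i ↦ τ i ω
  have hW : Measurable W := measurable_pi_lambda _ fun i ↦ hτ i
  have hindep : IndepFun (τ j) W P :=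
    (hind.indepFun_finset {j} T (by simp [T]) hτ).comp
      (φ := fun y : ({j} : Finset ι) → ℝ ↦ y ⟨j, Finset.mem_singleton_self j⟩)
      (measurable_pi_apply _) measurable_id
  set D : Set (ℝ × (T → ℝ)) := {p | ∀ i, p.1 ≤ p.2 i}
  have hD : MeasurableSet D := by
    simp only [D, ofPred_forall]
    exact MeasurableSet.iInter fun i ↦
      measurableSet_le measurable_fst ((measurable_pi_apply i).comp measurable_snd)
  have hevent : {ω | ∀ i, τ j ω ≤ τ i ω} = (fun ω ↦ (τ j ω, W ω)) ⁻¹' D := by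
    ext ω
    refine ⟨fun h i ↦ h i, fun h i ↦ ?_⟩
    rcases eq_or_ne i j with rfl | hij
    · exact le_rfl
    · exact h ⟨i, Finset.mem_erase.mpr ⟨hij, Finset.mem_univ i⟩⟩
  have hslice : ∀ a, W ⁻¹' (Prod.mk a ⁻¹' D) = ⋂ i ∈ T, τ i ⁻¹' Ici a := fun a ↦ by
    ext ω
    simp [D, W]
  rw [hevent, hindep.measure_preimage_eq_lintegral (hτ j) hW hD, hlaw j]
  simp_rw [hslice, measure_biInter_Ici_of_iIndepFun_expMeasure hτ hind hrate hlaw]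
  rw [lintegral_exp_neg_mul_max_expMeasure (hrate j)
      (Finset.sum_nonneg fun i _ ↦ (hrate i).le), Finset.add_sum_erase _ _ (Finset.mem_univ j)]

end ExponentialClocks

end ProbabilityTheory

lemma existsUnique_forall_le_of_injective {ι α : Type*} [Finite ι] [Nonempty ι] [LinearOrder α]
    {f : ι → α} (hf : Function.Injective f) : ∃! i, ∀ j, f i ≤ f j := by
  obtain ⟨i, hi⟩ := Finite.exists_min f
  exact ⟨i, hi, fun k hk ↦ hf (le_antisymm (hk i) (hi k))⟩

lemma measure_existsUnique_forall_le_eq_one {Ω ι α : Type*} [MeasurableSpace Ω]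
    [Finite ι] [Nonempty ι] [LinearOrder α] {P : Measure Ω} [IsProbabilityMeasure P]
    {τ : ι → Ω → α} (hties : ∀ i j, i ≠ j → P {ω | τ i ω = τ j ω} = 0) :
    P {ω | ∃! i, ∀ j, τ i ω ≤ τ j ω} = 1 := by
  have := Fintype.ofFinite ι
  have hnoninj : P {ω | ¬Function.Injective fun i ↦ τ i ω} = 0 := by
    refine measure_mono_null (fun ω hω ↦ ?_) (measure_iUnion_null fun i ↦
      measure_iUnion_null fun j ↦ measure_iUnion_null fun hij ↦ hties i j hij)
    obtain ⟨i, j, heq, hij⟩ := Function.not_injective_iff.mp hω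
    exact mem_iUnion₂.mpr ⟨i, j, mem_iUnion.mpr ⟨hij, heq⟩⟩
  rw [← measure_univ (μ := P)]
  refine measure_congr (ae_eq_univ.mpr (measure_mono_null (fun ω hω ↦ ?_) hnoninj))
  exact fun hinj ↦ hω (existsUnique_forall_le_of_injective hinj)

noncomputable def lookdownTime (ρ lam v u : ℝ) : ℝ :=
  if v < u then -Real.log ((lam - u) / (lam - v)) / ρ else -Real.log (u / v) / ρ

lemma measurable_lookdownTime (ρ lam v : ℝ) : Measurable (lookdownTime ρ lam v) := by
  unfold lookdownTime
  exact Measurable.ite (measurableSet_lt measurable_const measurable_id) (by fun_prop)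
    (by fun_prop)

lemma eq_lookdownTime {ρ lam v u s : ℝ} (hρ : ρ ≠ 0) (hu : u ≠ v)
    (habove : v < u → Real.exp (-(ρ * s)) = (lam - u) / (lam - v))
    (hbelow : u < v → Real.exp (-(ρ * s)) = u / v) :
    s = lookdownTime ρ lam v u := by
  have hsolve : ∀ w, Real.exp (-(ρ * s)) = w → s = -Real.log w / ρ := fun w hw ↦ by
    rw [← hw, Real.log_exp, neg_neg, mul_div_cancel_left₀ _ hρ]
  rcases hu.lt_or_gt with h | h
  · rw [lookdownTime, if_neg h.not_gt]
    exact hsolve _ (hbelow h)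
  · rw [lookdownTime, if_pos h]
    exact hsolve _ (habove h)

lemma lt_neg_log_div_iff {ρ t w : ℝ} (hρ : 0 < ρ) (ht : 0 ≤ t) (hw : 0 ≤ w) :
    t < -Real.log w / ρ ↔ 0 < w ∧ w < Real.exp (-(ρ * t)) := by
  rw [lt_div_iff₀ hρ, lt_neg, mul_comm]
  rcases hw.eq_or_lt with rfl | hw
  · simp only [Real.log_zero, lt_self_iff_false, false_and, iff_false, not_lt]
    exact neg_nonpos.mpr (mul_nonneg hρ.le ht)
  · rw [Real.log_lt_iff_lt_exp hw]
    exact ⟨fun h ↦ ⟨hw, h⟩, And.right⟩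

section LookdownTime

variable {ρ lam v t : ℝ}

lemma lt_lookdownTime_iff (hρ : 0 < ρ) (hv : 0 < v) (hvlam : v < lam) (ht : 0 ≤ t) {u : ℝ}
    (hu : u ∈ Icc 0 lam) :
    t < lookdownTime ρ lam v u ↔
      u ∈ Ioo (lam - (lam - v) * Real.exp (-(ρ * t))) lam ∪ Ioo 0 (v * Real.exp (-(ρ * t))) := by
  set c := Real.exp (-(ρ * t))
  have hc : c ≤ 1 := Real.exp_le_one_iff.mpr (neg_nonpos.mpr (mul_nonneg hρ.le ht))
  have hlamvc : (lam - v) * c ≤ lam - v := mul_le_of_le_one_right (by linarith) hc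
  have hvc : v * c ≤ v := mul_le_of_le_one_right hv.le hc
  simp only [mem_union, mem_Ioo, lookdownTime]
  split_ifs with hvu
  · rw [lt_neg_log_div_iff hρ ht (div_nonneg (by linarith [hu.2]) (by linarith)),
      div_pos_iff_of_pos_right (by linarith), div_lt_iff₀ (by linarith)]
    constructor
    · rintro ⟨h1, h2⟩
      left; constructor <;> linarith
    · rintro (⟨h1, h2⟩ | ⟨h1, h2⟩)
      · constructor <;> linarith
      · linarith
  · rw [lt_neg_log_div_iff hρ ht (div_nonneg hu.1 hv.le), div_pos_iff_of_pos_right hv,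
      div_lt_iff₀ hv]
    constructor
    · rintro ⟨h1, h2⟩
      right; constructor <;> linarith
    · rintro (⟨h1, h2⟩ | ⟨h1, h2⟩)
      · linarith
      · constructor <;> linarith

lemma Icc_inter_lookdownTime_preimage_Ioi (hρ : 0 < ρ) (hv : 0 < v) (hvlam : v < lam)
    (ht : 0 ≤ t) :
    Icc 0 lam ∩ lookdownTime ρ lam v ⁻¹' Ioi t =
      Ioo (lam - (lam - v) * Real.exp (-(ρ * t))) lam ∪ Ioo 0 (v * Real.exp (-(ρ * t))) := by
  have hc : Real.exp (-(ρ * t)) ≤ 1 :=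
    Real.exp_le_one_iff.mpr (neg_nonpos.mpr (mul_nonneg hρ.le ht))
  ext u
  by_cases hu : u ∈ Icc 0 lam
  · simp only [mem_inter_iff, hu, true_and, mem_preimage, mem_Ioi,
      lt_lookdownTime_iff hρ hv hvlam ht hu]
  · simp only [mem_inter_iff, hu, false_and, false_iff]
    rintro (⟨h1, h2⟩ | ⟨h1, h2⟩) <;> refine hu ⟨?_, ?_⟩ <;> nlinarith

lemma volume_Icc_inter_lookdownTime_preimage_Ioi (hρ : 0 < ρ) (hv : 0 < v) (hvlam : v < lam)
    (ht : 0 ≤ t) :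
    volume (Icc 0 lam ∩ lookdownTime ρ lam v ⁻¹' Ioi t) =
      ENNReal.ofReal (lam * Real.exp (-(ρ * t))) := by
  set c := Real.exp (-(ρ * t))
  have hc0 : 0 < c := Real.exp_pos _
  have hc : c ≤ 1 := Real.exp_le_one_iff.mpr (neg_nonpos.mpr (mul_nonneg hρ.le ht))
  have hdisj : Disjoint (Ioo (lam - (lam - v) * c) lam) (Ioo 0 (v * c)) :=
    disjoint_left.mpr fun u h1 h2 ↦ by nlinarith [h1.1, h2.2]
  rw [Icc_inter_lookdownTime_preimage_Ioi hρ hv hvlam ht, measure_union hdisj measurableSet_Ioo,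
    Real.volume_Ioo, Real.volume_Ioo, ← ENNReal.ofReal_add (by nlinarith) (by nlinarith)]
  ring_nf

lemma map_lookdownTime_cond_Icc (hρ : 0 < ρ) (hv : 0 < v) (hvlam : v < lam) :
    (volume[|Icc 0 lam]).map (lookdownTime ρ lam v) = expMeasure ρ := by
  have hlam : 0 < lam := hv.trans hvlam
  have := cond_isProbabilityMeasure_of_finite (μ := volume) (s := Icc 0 lam)
    (by simp [hlam]) (by simp)
  have := Measure.isProbabilityMeasure_map (μ := volume[|Icc 0 lam])
    (measurable_lookdownTime ρ lam v).aemeasurable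
  refine eq_expMeasure_of_measure_Ioi hρ fun t ht ↦ ?_
  rw [Measure.map_apply (measurable_lookdownTime ρ lam v) measurableSet_Ioi,
    cond_apply measurableSet_Icc, volume_Icc_inter_lookdownTime_preimage_Ioi hρ hv hvlam ht,
    Real.volume_Icc, sub_zero, ← ENNReal.ofReal_inv_of_pos hlam,
    ← ENNReal.ofReal_mul (by positivity), inv_mul_cancel_left₀ hlam.ne']

end LookdownTime

theorem discrete_birth_parent_selection_general
    {Ω : Type*} [MeasurableSpace Ω] (P : Measure Ω) [IsProbabilityMeasure P]
    {E : Type*} (n : ℕ) (hn : 0 < n) (x : Fin n → E) (r : E → ℝ)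
    (hr : ∀ i, 0 < r (x i))
    (lam v : ℝ) (hv : 0 < v) (hvlam : v < lam)
    (U : Fin n → Ω → ℝ) (hUmeas : ∀ i, Measurable (U i))
    (hUindep : iIndepFun U P)
    (hUunif : ∀ i, MeasureTheory.pdf.IsUniform (U i) (Set.Icc 0 lam) P)
    (τ : Fin n → Ω → ℝ) (hτmeas : ∀ i, Measurable (τ i))
    (hτ_above : ∀ i ω, v < U i ω →
      Real.exp (-(r (x i) * τ i ω)) = (lam - U i ω) / (lam - v))
    (hτ_below : ∀ i ω, U i ω < v →
      Real.exp (-(r (x i) * τ i ω)) = U i ω / v) :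
    iIndepFun τ P ∧
    (∀ i, ∀ t : ℝ, 0 ≤ t →
      P {ω | t < τ i ω} = ENNReal.ofReal (Real.exp (-(r (x i) * t)))) ∧
    P {ω | ∃! i : Fin n, ∀ j, τ i ω ≤ τ j ω} = 1 ∧
    (∀ j : Fin n,
      P {ω | ∀ i, τ j ω ≤ τ i ω} = ENNReal.ofReal (r (x j) / ∑ i, r (x i))) := by
  have hτU : ∀ i, τ i =ᵐ[P] lookdownTime (r (x i)) lam v ∘ U i := fun i ↦ by
    have hUv : P (U i ⁻¹' {v}) = 0 := by
      rw [← Measure.map_apply (hUmeas i) (measurableSet_singleton v)]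
      exact (hUunif i).absolutelyContinuous Real.volume_singleton
    filter_upwards [measure_eq_zero_iff_ae_notMem.mp hUv] with ω hω
    exact eq_lookdownTime (hr i).ne' hω (hτ_above i ω) (hτ_below i ω)
  have hind : iIndepFun τ P :=
    (hUindep.comp _ fun i ↦ measurable_lookdownTime (r (x i)) lam v).congr
      fun i ↦ (hτU i).symm
  have hlaw : ∀ i, P.map (τ i) = expMeasure (r (x i)) := fun i ↦ by
    rw [Measure.map_congr (hτU i), ← Measure.map_map (measurable_lookdownTime _ _ _) (hUmeas i),
      hUunif i, map_lookdownTime_cond_Icc (hr i) hv hvlam]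
  have hatom : ∀ i a, P (τ i ⁻¹' {a}) = 0 := fun i a ↦ by
    rw [← Measure.map_apply (hτmeas i) (measurableSet_singleton a), hlaw i]
    exact expMeasure_absolutelyContinuous _ Real.volume_singleton
  have : Nonempty (Fin n) := ⟨⟨0, hn⟩⟩
  refine ⟨hind, fun i t ht ↦ ?_, measure_existsUnique_forall_le_eq_one fun i j hij ↦
    (hind.indepFun hij).measure_eq_eq_zero (hτmeas i) (hτmeas j) (hatom j),
    measure_forall_le_of_iIndepFun_expMeasure hτmeas hind hr hlaw⟩
  change P (τ i ⁻¹' Ioi t) = _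
  rw [← Measure.map_apply (hτmeas i) measurableSet_Ioi, hlaw i, expMeasure_Ioi (hr i),
    max_eq_left ht]

/-- In the lookdown construction of discrete birth events with types `x i`, parental
rates `r (x i) > 0`, and i.i.d. uniform levels `U i` on `[0, λ]`, the auxiliary
variables `τ i` (defined by `e^{−r(xᵢ)τᵢ} = (λ − Uᵢ)/(λ − v*)` if `Uᵢ > v*` and by
`e^{−r(xᵢ)τᵢ} = Uᵢ/v*` if `Uᵢ < v*`) are independent and exponential with rates
`r (x i)`, almost surely a unique index attains the minimum, and the probability that
index `j` attains the minimum is `r (x j) / ∑ i, r (x i)`. -/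
theorem discrete_birth_parent_selection
    {Ω : Type*} [MeasurableSpace Ω] (P : Measure Ω) [IsProbabilityMeasure P]
    {E : Type*} (n : ℕ) (hn : 0 < n) (x : Fin n → E) (r : E → ℝ)
    (hr : ∀ i, 0 < r (x i))
    (lam v : ℝ) (hlam : 0 < lam) (hv : 0 < v) (hvlam : v < lam)
    (U : Fin n → Ω → ℝ) (hUmeas : ∀ i, Measurable (U i))
    (hUindep : iIndepFun U P)
    (hUunif : ∀ i, MeasureTheory.pdf.IsUniform (U i) (Set.Icc 0 lam) P)
    (τ : Fin n → Ω → ℝ) (hτmeas : ∀ i, Measurable (τ i))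
    (hτ_above : ∀ i ω, v < U i ω →
      Real.exp (-(r (x i) * τ i ω)) = (lam - U i ω) / (lam - v))
    (hτ_below : ∀ i ω, U i ω < v →
      Real.exp (-(r (x i) * τ i ω)) = U i ω / v) :
    iIndepFun τ P ∧
    (∀ i, ∀ t : ℝ, 0 ≤ t →
      P {ω | t < τ i ω} = ENNReal.ofReal (Real.exp (-(r (x i) * t)))) ∧
    P {ω | ∃! i : Fin n, ∀ j, τ i ω ≤ τ j ω} = 1 ∧
    (∀ j : Fin n,
      P {ω | ∀ i, τ j ω ≤ τ i ω} = ENNReal.ofReal (r (x j) / ∑ i, r (x i))) :=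
  discrete_birth_parent_selection_general P n hn x r hr lam v hv hvlam U hUmeas hUindep hUunif τ
    hτmeas hτ_above hτ_below
end

section
/- Let λ > 0, let k be a positive integer, define G_k^λ(u) = λ^{−k}(λ − u)^{k+1} − (λ − u), and let g : [0, λ] → ℝ be continuously differentiable. Then λ^{−1} ∫₀^λ [ g(u) · ((k+1)/λ^k) ( (∫_u^λ g(v) dv)^k − (λ − u)^k ) + G_k^λ(u) g′(u) ] du = ḡ^{k+1} − ḡ, where ḡ = λ^{−1} ∫₀^λ g(u) du. -/
open MeasureTheory intervalIntegral

/-!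
With `H u = ∫_u^λ g`, the integrand is the derivative of the potential
`G_k^λ(u) g(u) − H(u)^{k+1} / λ^k + H(u)`, since `H' = −g` and `(G_k^λ)'(u) = 1 − (k+1)(λ−u)^k/λ^k`.
The drift `G_k^λ` vanishes at both ends of `[0, λ]` and `H(λ) = 0`, so the integral is
`H(0)^{k+1} / λ^k − H(0)`, which is `λ (ḡ^{k+1} − ḡ)`.
-/

/-- The level drift `G_k^λ`. -/
noncomputable def birthDrift (lam : ℝ) (k : ℕ) (u : ℝ) : ℝ :=
  (lam - u) ^ (k + 1) / lam ^ k - (lam - u)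

theorem birthDrift_self (lam : ℝ) (k : ℕ) : birthDrift lam k lam = 0 := by
  simp [birthDrift]

theorem birthDrift_zero {lam : ℝ} (hlam : lam ≠ 0) (k : ℕ) : birthDrift lam k 0 = 0 := by
  simp [birthDrift, pow_succ, hlam]

theorem hasDerivAt_birthDrift (lam : ℝ) (k : ℕ) (u : ℝ) :
    HasDerivAt (birthDrift lam k) (1 - (k + 1) * (lam - u) ^ k / lam ^ k) u := by
  have hsub : HasDerivAt (fun x : ℝ => lam - x) (-1) u := by
    simpa using (hasDerivAt_id u).const_sub lam
  refine (((hsub.pow (k + 1)).div_const (lam ^ k)).sub hsub).congr_deriv ?_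
  push_cast [Nat.add_sub_cancel]
  ring

@[fun_prop]
theorem continuous_birthDrift (lam : ℝ) (k : ℕ) : Continuous (birthDrift lam k) := by
  unfold birthDrift
  fun_prop

theorem hasDerivAt_integral_left_of_mem_Ioo {f : ℝ → ℝ} {a b u : ℝ}
    (hf : ContinuousOn f (Set.Icc a b)) (hu : u ∈ Set.Ioo a b) :
    HasDerivAt (fun x => ∫ t in x..b, f t) (-f u) u := by
  have hfu : ContinuousOn f (Set.Ioo a b) := hf.mono Set.Ioo_subset_Icc_self
  refine integral_hasDerivAt_left ?_ (hfu.stronglyMeasurableAtFilter isOpen_Ioo u hu)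
    (hfu.continuousAt (isOpen_Ioo.mem_nhds hu))
  exact (hf.mono (Set.uIcc_subset_Icc (Set.Ioo_subset_Icc_self hu)
    (Set.right_mem_Icc.2 (hu.1.trans hu.2).le))).intervalIntegrable

noncomputable def averagingPotential (lam : ℝ) (k : ℕ) (g H : ℝ → ℝ) (x : ℝ) : ℝ :=
  birthDrift lam k x * g x - H x ^ (k + 1) / lam ^ k + H x

theorem hasDerivAt_averagingPotential {lam : ℝ} {k : ℕ} {g g' H : ℝ → ℝ} {u : ℝ}
    (hH : HasDerivAt H (-g u) u) (hg : HasDerivAt g (g' u) u) :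
    HasDerivAt (averagingPotential lam k g H)
      (g u * ((k + 1 : ℝ) / lam ^ k) * (H u ^ k - (lam - u) ^ k)
        + birthDrift lam k u * g' u) u := by
  refine ((((hasDerivAt_birthDrift lam k u).mul hg).sub
    ((hH.pow (k + 1)).div_const (lam ^ k))).add hH).congr_deriv ?_
  push_cast [Nat.add_sub_cancel]
  ring

theorem integral_averagingIntegrand {lam : ℝ} (hlam : 0 < lam) (k : ℕ) {g g' : ℝ → ℝ}
    (hderiv : ∀ u ∈ Set.Icc 0 lam, HasDerivAt g (g' u) u)
    (hcont : ContinuousOn g' (Set.Icc 0 lam)) :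
    ∫ u in (0:ℝ)..lam,
        (g u * ((k + 1 : ℝ) / lam ^ k) * ((∫ v in u..lam, g v) ^ k - (lam - u) ^ k)
          + birthDrift lam k u * g' u)
      = (∫ u in (0:ℝ)..lam, g u) ^ (k + 1) / lam ^ k - ∫ u in (0:ℝ)..lam, g u := by
  set H : ℝ → ℝ := fun u => ∫ v in u..lam, g v
  have hg : ContinuousOn g (Set.Icc 0 lam) :=
    fun u hu => (hderiv u hu).continuousAt.continuousWithinAt
  have hI : Set.uIcc 0 lam = Set.Icc 0 lam := Set.uIcc_of_le hlam.le
  have hH : ContinuousOn H (Set.Icc 0 lam) :=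
    hI ▸ continuousOn_primitive_interval_left (hI ▸ hg.integrableOn_Icc)
  have hpot := integral_eq_sub_of_hasDerivAt_of_le hlam.le
    (f := averagingPotential lam k g H) (by unfold averagingPotential; fun_prop)
    (fun u hu => hasDerivAt_averagingPotential
      (hasDerivAt_integral_left_of_mem_Ioo hg hu) (hderiv u (Set.Ioo_subset_Icc_self hu)))
    (ContinuousOn.intervalIntegrable (by rw [hI]; fun_prop))
  rw [hpot]
  simp [averagingPotential, H, birthDrift_self, birthDrift_zero hlam.ne']
  ring

theorem continuous_birth_full_averaging_general
    (lam : ℝ) (hlam : 0 < lam) (k : ℕ) (g g' : ℝ → ℝ)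
    (hderiv : ∀ u ∈ Set.Icc 0 lam, HasDerivAt g (g' u) u)
    (hcont : ContinuousOn g' (Set.Icc 0 lam)) :
    lam⁻¹ * ∫ u in (0:ℝ)..lam,
        (g u * ((k + 1 : ℝ) / lam ^ k) * ((∫ v in u..lam, g v) ^ k - (lam - u) ^ k)
          + ((lam - u) ^ (k + 1) / lam ^ k - (lam - u)) * g' u)
      = (lam⁻¹ * ∫ u in (0:ℝ)..lam, g u) ^ (k + 1)
        - lam⁻¹ * ∫ u in (0:ℝ)..lam, g u := by
  have h := integral_averagingIntegrand hlam k hderiv hcont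
  simp only [birthDrift] at h
  rw [h, mul_pow, inv_pow]
  field_simp
  ring

/-- The full averaging computation for the continuous-birth generator: with
`G_k^λ(u) = λ^{−k}(λ−u)^{k+1} − (λ−u)` and `ḡ = λ⁻¹ ∫₀^λ g`,
`λ⁻¹ ∫₀^λ [ g(u) ((k+1)/λ^k) ((∫_u^λ g)^k − (λ−u)^k) + G_k^λ(u) g'(u) ] du
  = ḡ^{k+1} − ḡ`. -/
theorem continuous_birth_full_averaging
    (lam : ℝ) (hlam : 0 < lam) (k : ℕ) (hk : 0 < k) (g g' : ℝ → ℝ)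
    (hderiv : ∀ u ∈ Set.Icc 0 lam, HasDerivAt g (g' u) u)
    (hcont : ContinuousOn g' (Set.Icc 0 lam)) :
    lam⁻¹ * ∫ u in (0:ℝ)..lam,
        (g u * ((k + 1 : ℝ) / lam ^ k) * ((∫ v in u..lam, g v) ^ k - (lam - u) ^ k)
          + ((lam - u) ^ (k + 1) / lam ^ k - (lam - u)) * g' u)
      = (lam⁻¹ * ∫ u in (0:ℝ)..lam, g u) ^ (k + 1)
        - lam⁻¹ * ∫ u in (0:ℝ)..lam, g u :=
  continuous_birth_full_averaging_general lam hlam k g g' hderiv hcont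
end

section
/- Let N ≥ 2, let E be a measurable space, let X = (X₁, …, X_N) be an exchangeable E-valued random vector (i.e., (X_{σ(1)}, …, X_{σ(N)}) has the same distribution as X for every permutation σ of {1, …, N}), and let (I, J) be uniformly distributed on {(i, j) : 1 ≤ i < j ≤ N}, independent of X. Define Y = (Y₁, …, Y_N) by Y_J = X_I and Y_k = X_k for k ≠ J. Then Y is exchangeable. -/
/-!
Given `(I, J) = (i, j)`, the vector `Y` is the image of `X` under the lookdown map copying
coordinate `i` onto coordinate `j`; by independence, the law of `Y` is the uniform mixture of
the laws of these images over the pairs `i < j`. Exchangeability of `X` gives two facts about the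
`(i, j)`-component: permuting its coordinates by `σ` yields the `(σ⁻¹ i, σ⁻¹ j)`-component, and
(using the transposition of `i` and `j`) it is symmetric in `i` and `j`. Hence the mixture is
really a sum over unordered pairs `{i, j}`, which `σ` merely permutes.
-/

open MeasureTheory ProbabilityTheory Function

theorem Finset.sum_filter_lt_perm_of_symm {α M : Type*} [LinearOrder α] [Fintype α]
    [AddCommMonoid M] (f : α → α → M) (hf : ∀ a b, f a b = f b a) (σ : Equiv.Perm α) :
    ∑ q : α × α with q.1 < q.2, f (σ q.1) (σ q.2) =
      ∑ q : α × α with q.1 < q.2, f q.1 q.2 := by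
  set F : Sym2 α → M := Sym2.lift ⟨f, hf⟩
  have sum_eq_sum_sym2 (p : Sym2 α → M) :
      ∑ q : α × α with q.1 < q.2, p s(q.1, q.2) = ∑ z ∈ univ.sym2 with ¬z.IsDiag, p z := by
    rw [sum_sym2_filter_not_isDiag]
    congr 1
    ext q
    simpa using ne_of_lt
  calc ∑ q : α × α with q.1 < q.2, f (σ q.1) (σ q.2)
      = ∑ z ∈ univ.sym2 with ¬z.IsDiag, F (z.map σ) := by rw [← sum_eq_sum_sym2]; rfl
    _ = ∑ z ∈ univ.sym2 with ¬z.IsDiag, F z :=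
        sum_nbij' (Sym2.map σ) (Sym2.map σ.symm) (by simp [Sym2.isDiag_map σ.injective])
          (by simp [Sym2.isDiag_map σ.symm.injective]) (by simp [Sym2.map_map])
          (by simp [Sym2.map_map]) (fun _ _ => rfl)
    _ = ∑ q : α × α with q.1 < q.2, f q.1 q.2 := by rw [← sum_eq_sum_sym2]; rfl

theorem ProbabilityTheory.IndepFun.map_comp_eq_sum_smul {Ω α β γ : Type*}
    [MeasurableSpace Ω] [MeasurableSpace α] [MeasurableSpace β] [MeasurableSpace γ] [Fintype β]
    [MeasurableSingletonClass β] {P : Measure Ω} [IsFiniteMeasure P] {X : Ω → α} {T : Ω → β}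
    (hX : Measurable X) (hT : Measurable T) (hXT : IndepFun X T P) {F : β → α → γ}
    (hF : ∀ b, Measurable (F b)) :
    P.map (fun ω => F (T ω) (X ω)) = ∑ b, P (T ⁻¹' {b}) • (P.map X).map (F b) := by
  have hFu : Measurable fun p : α × β => F p.2 p.1 := measurable_from_prod_countable_left hF
  have hlaw := hXT.map_prod_eq_prod_map_map hX.aemeasurable hT.aemeasurable
  ext A hA
  calc P.map (fun ω => F (T ω) (X ω)) A
      = (P.map fun ω => (X ω, T ω)) ((fun p : α × β => F p.2 p.1) ⁻¹' A) := by
        have hmeas : Measurable fun ω => F (T ω) (X ω) := hFu.comp (hX.prodMk hT)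
        rw [Measure.map_apply hmeas hA, Measure.map_apply (hX.prodMk hT) (hFu hA)]
        rfl
    _ = ∑ b, P (T ⁻¹' {b}) * (P.map X).map (F b) A := by
        rw [hlaw, Measure.prod_apply_symm (hFu hA), lintegral_fintype]
        refine Finset.sum_congr rfl fun b _ => ?_
        rw [Measure.map_apply hT (measurableSet_singleton b), Measure.map_apply (hF b) hA,
          mul_comm]
        rfl
    _ = _ := by simp

section Lookdown

variable {ι E : Type*}

section

variable [DecidableEq ι]

def lookdown (i j : ι) (x : ι → E) : ι → E := update x j (x i)

theorem lookdown_comp_perm (σ : Equiv.Perm ι) (i j : ι) (x : ι → E) :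
    lookdown i j x ∘ σ = lookdown (σ⁻¹ i) (σ⁻¹ j) (x ∘ σ) := by
  simp [lookdown, update_comp_equiv]

theorem lookdown_comp_swap (i j : ι) (x : ι → E) :
    lookdown i j (x ∘ Equiv.swap i j) = lookdown j i x := by
  ext k
  by_cases hkj : k = j <;> by_cases hki : k = i <;>
    simp_all [lookdown, Equiv.swap_apply_of_ne_of_ne]

end

variable [MeasurableSpace E]

theorem measurable_lookdown [DecidableEq ι] (i j : ι) : Measurable (lookdown (E := E) i j) :=
  (measurable_update' (a := j)).comp (measurable_id.prodMk (measurable_pi_apply i))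

theorem measurable_comp_perm (σ : Equiv.Perm ι) : Measurable fun x : ι → E => x ∘ σ :=
  measurable_pi_lambda _ fun i => measurable_pi_apply (σ i)

def Exchangeable (μ : Measure (ι → E)) : Prop :=
  ∀ σ : Equiv.Perm ι, μ.map (· ∘ σ) = μ

namespace Exchangeable

variable [DecidableEq ι] {μ : Measure (ι → E)}

theorem map_lookdown_comm (hμ : Exchangeable μ) (i j : ι) :
    μ.map (lookdown i j) = μ.map (lookdown j i) := by
  conv_lhs => rw [← hμ (Equiv.swap i j)]
  rw [Measure.map_map (measurable_lookdown i j) (measurable_comp_perm _)]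
  exact congrArg (Measure.map · μ) (funext (lookdown_comp_swap i j))

theorem map_comp_lookdown (hμ : Exchangeable μ) (σ : Equiv.Perm ι) (i j : ι) :
    μ.map (fun x => lookdown i j x ∘ σ) = μ.map (lookdown (σ⁻¹ i) (σ⁻¹ j)) := by
  conv_rhs => rw [← hμ σ]
  rw [Measure.map_map (measurable_lookdown _ _) (measurable_comp_perm _)]
  exact congrArg (Measure.map · μ) (funext (lookdown_comp_perm σ i j))

theorem sum_map_comp_lookdown [LinearOrder ι] [Fintype ι] (hμ : Exchangeable μ)
    (σ : Equiv.Perm ι) :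
    ∑ q : ι × ι with q.1 < q.2, μ.map (fun x => lookdown q.1 q.2 x ∘ σ)
      = ∑ q : ι × ι with q.1 < q.2, μ.map (lookdown q.1 q.2) :=
  (Finset.sum_congr rfl fun q _ => hμ.map_comp_lookdown σ q.1 q.2).trans
    (Finset.sum_filter_lt_perm_of_symm (fun i j => μ.map (lookdown i j))
      hμ.map_lookdown_comm σ⁻¹)

end Exchangeable

end Lookdown

theorem lookdown_preserves_exchangeability_general
    {Ω : Type*} [MeasurableSpace Ω] (P : Measure Ω) [IsProbabilityMeasure P]
    {E : Type*} [MeasurableSpace E]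
    (N : ℕ)
    (X : Fin N → Ω → E) (hXmeas : ∀ i, Measurable (X i))
    (hXexch : ∀ σ : Equiv.Perm (Fin N),
      Measure.map (fun ω => fun i => X (σ i) ω) P
        = Measure.map (fun ω => fun i => X i ω) P)
    (IJ : Ω → Fin N × Fin N) (hIJmeas : Measurable IJ)
    (hIJsupp : P {ω | (IJ ω).1 < (IJ ω).2} = 1)
    (hIJunif : ∀ q : Fin N × Fin N, q.1 < q.2 →
      P {ω | IJ ω = q} = (N.choose 2 : ENNReal)⁻¹)
    (hindep : IndepFun (fun ω => fun i => X i ω) IJ P)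
    (Y : Ω → Fin N → E)
    (hY : ∀ ω k, Y ω k = if k = (IJ ω).2 then X (IJ ω).1 ω else X k ω) :
    ∀ σ : Equiv.Perm (Fin N),
      Measure.map (fun ω => fun i => Y ω (σ i)) P = Measure.map Y P := by
  have hXm : Measurable fun ω i => X i ω := measurable_pi_lambda _ hXmeas
  have hμ : Exchangeable (P.map fun ω i => X i ω) := fun σ => by
    rw [Measure.map_map (measurable_comp_perm σ) hXm]
    exact hXexch σ
  have hweight (q : Fin N × Fin N) :
      P (IJ ⁻¹' {q}) = if q.1 < q.2 then (N.choose 2 : ENNReal)⁻¹ else 0 := by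
    split_ifs with hq
    · exact hIJunif q hq
    · have hS : MeasurableSet {ω | (IJ ω).1 < (IJ ω).2} :=
        hIJmeas (Set.toFinite {q : Fin N × Fin N | q.1 < q.2}).measurableSet
      have hnull : P {ω | (IJ ω).1 < (IJ ω).2}ᶜ = 0 := (prob_compl_eq_zero_iff hS).2 hIJsupp
      exact measure_mono_null (fun ω (hω : IJ ω = q) => by simpa [hω] using hq) hnull
  have hlaw (τ : Equiv.Perm (Fin N)) :
      P.map (fun ω i => Y ω (τ i)) = (N.choose 2 : ENNReal)⁻¹ •
        ∑ q : Fin N × Fin N with q.1 < q.2, (P.map fun ω i => X i ω).map (lookdown q.1 q.2) := by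
    have hYτ : (fun ω i => Y ω (τ i)) =
        fun ω => lookdown (IJ ω).1 (IJ ω).2 (fun i => X i ω) ∘ τ := by
      ext ω k
      simp [hY, lookdown, update_apply]
    rw [hYτ, hindep.map_comp_eq_sum_smul hXm hIJmeas (F := fun q x => lookdown q.1 q.2 x ∘ τ)
      fun q => (measurable_comp_perm τ).comp (measurable_lookdown _ _)]
    simp only [hweight, ite_smul, zero_smul, ← Finset.sum_filter, ← Finset.smul_sum]
    rw [hμ.sum_map_comp_lookdown τ]
  intro σ
  rw [hlaw σ, ← hlaw 1]
  rfl

/-- A single lookdown replacement event preserves exchangeability: if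
`X = (X₁, …, X_N)` is exchangeable, `(I, J)` is uniform on `{(i,j) : i < j}` and
independent of `X`, and `Y` is obtained from `X` by replacing the coordinate `J`
with a copy of coordinate `I`, then `Y` is exchangeable. -/
theorem lookdown_preserves_exchangeability
    {Ω : Type*} [MeasurableSpace Ω] (P : Measure Ω) [IsProbabilityMeasure P]
    {E : Type*} [MeasurableSpace E]
    (N : ℕ) (hN : 2 ≤ N)
    (X : Fin N → Ω → E) (hXmeas : ∀ i, Measurable (X i))
    (hXexch : ∀ σ : Equiv.Perm (Fin N),
      Measure.map (fun ω => fun i => X (σ i) ω) P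
        = Measure.map (fun ω => fun i => X i ω) P)
    (IJ : Ω → Fin N × Fin N) (hIJmeas : Measurable IJ)
    (hIJsupp : P {ω | (IJ ω).1 < (IJ ω).2} = 1)
    (hIJunif : ∀ q : Fin N × Fin N, q.1 < q.2 →
      P {ω | IJ ω = q} = (N.choose 2 : ENNReal)⁻¹)
    (hindep : IndepFun (fun ω => fun i => X i ω) IJ P)
    (Y : Ω → Fin N → E)
    (hY : ∀ ω k, Y ω k = if k = (IJ ω).2 then X (IJ ω).1 ω else X k ω) :
    ∀ σ : Equiv.Perm (Fin N),
      Measure.map (fun ω => fun i => Y ω (σ i)) P = Measure.map Y P :=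
  lookdown_preserves_exchangeability_general P N X hXmeas hXexch IJ hIJmeas hIJsupp hIJunif hindep Y
    hY
end

section
/- Let A be a finite nonempty set, let u : A → ℝ be injective, and let r : A → ℝ, g : A → ℝ, and ĝ : A × A → ℝ be arbitrary functions. For a nonempty subset S ⊆ A, let m(S) denote the unique element of S minimizing u. Then Σ_{∅ ≠ S ⊆ A} ( ∏_{a ∈ S} r(a) ĝ(m(S), a) ) ( ∏_{a ∈ A∖S} (1 − r(a)) g(a) ) = Σ_{a* ∈ A} r(a*) ĝ(a*, a*) ( ∏_{a : u(a) < u(a*)} (1 − r(a)) g(a) ) ( ∏_{a : u(a) > u(a*)} ( (1 − r(a)) g(a) + r(a) ĝ(a*, a) ) ). -/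
/-!
Group the nonempty subsets `S` by their lowest element `a* = m S`. Since the levels are
injective, the subsets with `m S = a*` are exactly `insert a* T` with `T` ranging over the
subsets of the individuals above `a*`, and the unselected individuals are then those below
`a*` together with those above `a*` outside `T`. Summing over `T` is the expansion of the
product `∏_{u a > u a*} ((1 - r a) g a + r a ĝ(a*, a))`.
-/

namespace Finset

variable {α β : Type*} [LinearOrder β] {u : α → β}

theorem minimizer_eq_iff (hu : Function.Injective u) {m : Finset α → α}
    (hm : ∀ S : Finset α, S.Nonempty → m S ∈ S ∧ ∀ a ∈ S, u (m S) ≤ u a)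
    {S : Finset α} (hS : S.Nonempty) (a : α) :
    m S = a ↔ a ∈ S ∧ ∀ b ∈ S, u a ≤ u b := by
  obtain ⟨hmem, hmin⟩ := hm S hS
  constructor
  · rintro rfl
    exact ⟨hmem, hmin⟩
  · rintro ⟨ha, hle⟩
    exact hu (le_antisymm (hmin a ha) (hle _ hmem))

theorem minimizer_insert [DecidableEq α] (hu : Function.Injective u) {m : Finset α → α}
    (hm : ∀ S : Finset α, S.Nonempty → m S ∈ S ∧ ∀ a ∈ S, u (m S) ≤ u a)
    {a : α} {T : Finset α} (hT : ∀ b ∈ T, u a < u b) : m (insert a T) = a := by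
  refine (minimizer_eq_iff hu hm (insert_nonempty a T) a).2 ⟨mem_insert_self a T, ?_⟩
  rintro b hb
  rcases mem_insert.1 hb with rfl | hb
  · exact le_rfl
  · exact (hT b hb).le

variable [Fintype α] [DecidableEq α]

theorem filter_minimizer_eq (hu : Function.Injective u) {m : Finset α → α}
    (hm : ∀ S : Finset α, S.Nonempty → m S ∈ S ∧ ∀ a ∈ S, u (m S) ≤ u a) (a : α) :
    {S ∈ (univ : Finset α).powerset.filter Finset.Nonempty | m S = a} =
      ({b | u a < u b} : Finset α).powerset.image (insert a) := by
  ext S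
  simp only [mem_filter, mem_powerset, subset_univ, true_and, mem_image]
  constructor
  · rintro ⟨hS, hmS⟩
    obtain ⟨haS, hle⟩ := (minimizer_eq_iff hu hm hS a).1 hmS
    refine ⟨S.erase a, fun b hb => ?_, insert_erase haS⟩
    obtain ⟨hba, hbS⟩ := mem_erase.1 hb
    exact mem_filter.2 ⟨mem_univ b, (hle b hbS).lt_of_ne fun h => hba (hu h).symm⟩
  · rintro ⟨T, hT, rfl⟩
    exact ⟨insert_nonempty a T, minimizer_insert hu hm fun b hb => (mem_filter.1 (hT hb)).2⟩

theorem sum_filter_minimizer_eq {M : Type*} [AddCommMonoid M] (hu : Function.Injective u)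
    {m : Finset α → α} (hm : ∀ S : Finset α, S.Nonempty → m S ∈ S ∧ ∀ a ∈ S, u (m S) ≤ u a)
    (a : α) (F : Finset α → M) :
    ∑ S ∈ univ.powerset.filter Finset.Nonempty with m S = a, F S =
      ∑ T ∈ ({b | u a < u b} : Finset α).powerset, F (insert a T) := by
  rw [filter_minimizer_eq hu hm, sum_image]
  intro T₁ hT₁ T₂ hT₂ h
  have not_mem {T : Finset α} (hT : T ∈ ({b | u a < u b} : Finset α).powerset) : a ∉ T :=
    fun ha => lt_irrefl (u a) (mem_filter.1 (mem_powerset.1 hT ha)).2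
  rw [← erase_insert (not_mem hT₁), ← erase_insert (not_mem hT₂)]
  exact congrArg (·.erase a) h

theorem prod_compl_insert {M : Type*} [CommMonoid M] (hu : Function.Injective u) (f : α → M)
    {a : α} {T : Finset α} (hT : ∀ b ∈ T, u a < u b) :
    ∏ b ∈ univ \ insert a T, f b =
      (∏ b ∈ {b | u b < u a}, f b) * ∏ b ∈ ({b | u a < u b} : Finset α) \ T, f b := by
  rw [← prod_union]
  · congr 1
    ext b
    simp only [mem_sdiff, mem_univ, true_and, mem_insert, not_or, mem_union, mem_filter]
    constructor
    · rintro ⟨hba, hbT⟩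
      rcases lt_trichotomy (u b) (u a) with h | h | h
      · exact Or.inl h
      · exact absurd (hu h) hba
      · exact Or.inr ⟨h, hbT⟩
    · rintro (h | ⟨h, hbT⟩)
      · exact ⟨fun hba => h.ne (congrArg u hba), fun hbT => (h.trans (hT b hbT)).false⟩
      · exact ⟨fun hba => h.ne' (congrArg u hba), hbT⟩
  · refine disjoint_left.2 fun b hb hb' => ?_
    exact ((mem_filter.1 hb).2.trans (mem_filter.1 (mem_sdiff.1 hb').1).2).false

end Finset

open Finset

open scoped Classical BigOperators

theorem one_for_one_replacement_partition_general
    {A : Type*} [Fintype A]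
    (u : A → ℝ) (hu : Function.Injective u)
    (r g : A → ℝ) (gHat : A → A → ℝ)
    (m : Finset A → A)
    (hm : ∀ S : Finset A, S.Nonempty → m S ∈ S ∧ ∀ a ∈ S, u (m S) ≤ u a) :
    ∑ S ∈ Finset.univ.powerset.filter Finset.Nonempty,
        (∏ a ∈ S, r a * gHat (m S) a) * (∏ a ∈ Finset.univ \ S, (1 - r a) * g a)
      = ∑ aStar : A, r aStar * gHat aStar aStar *
          (∏ a ∈ Finset.univ.filter (fun a => u a < u aStar), (1 - r a) * g a) *
          (∏ a ∈ Finset.univ.filter (fun a => u aStar < u a),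
            ((1 - r a) * g a + r a * gHat aStar a)) := by
  rw [← sum_fiberwise_of_maps_to (g := m) fun S _ => mem_univ (m S)]
  refine sum_congr rfl fun aStar _ => ?_
  rw [sum_filter_minimizer_eq hu hm,
    prod_congr rfl fun a _ => add_comm ((1 - r a) * g a) (r a * gHat aStar a), prod_add, mul_sum]
  refine sum_congr rfl fun T hT => ?_
  have hT_gt : ∀ b ∈ T, u aStar < u b := fun b hb => (mem_filter.1 (mem_powerset.1 hT hb)).2
  have haT : aStar ∉ T := fun h => lt_irrefl _ (hT_gt aStar h)
  rw [minimizer_insert hu hm hT_gt, prod_insert haT, prod_compl_insert hu _ hT_gt]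
  ring

/-- Partitioning on the lowest-level selected individual: for a finite nonempty set `A`
with injective levels `u`, selection weights `r`, and factors `g`, `gHat`, summing over all
nonempty subsets `S ⊆ A` (with `m S` the element of `S` with minimal level) equals the
sum over the choice of the lowest selected individual `a*`. -/
theorem one_for_one_replacement_partition
    {A : Type*} [Fintype A] [Nonempty A]
    (u : A → ℝ) (hu : Function.Injective u)
    (r g : A → ℝ) (gHat : A → A → ℝ)
    (m : Finset A → A)
    (hm : ∀ S : Finset A, S.Nonempty → m S ∈ S ∧ ∀ a ∈ S, u (m S) ≤ u a) :
    ∑ S ∈ Finset.univ.powerset.filter Finset.Nonempty,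
        (∏ a ∈ S, r a * gHat (m S) a) * (∏ a ∈ Finset.univ \ S, (1 - r a) * g a)
      = ∑ aStar : A, r aStar * gHat aStar aStar *
          (∏ a ∈ Finset.univ.filter (fun a => u a < u aStar), (1 - r a) * g a) *
          (∏ a ∈ Finset.univ.filter (fun a => u aStar < u a),
            ((1 - r a) * g a + r a * gHat aStar a)) :=
  one_for_one_replacement_partition_general u hu r g gHat m hm
end
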